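/- Performance Difference Lemma: for any two policies π and π' on a finite MDP with discount γ ∈ [0,1), V_π(ρ) - V_{π'}(ρ) = (1/(1-γ))·E_{s ~ d^π_ρ} E_{a ~ π(·|s)} [A_{π'}(s,a)], where d^π_ρ is the discounted state visitation distribution of π started from ρ and A_{π'}(s,a) = Q_{π'}(s,a) - V_{π'}(s). -/

import Mathlib

open Finset

set_option maxHeartbeats 1000000

/-- Performance Difference Lemma on a finite MDP.  `p t` is the state distribution
at time `t` under policy `π` started from `ρ`; `V'` is the value function of `π'`
(characterized by its Bellman equation); `Q'` and `Adv'` are the corresponding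
action-value and advantage functions; `d` is the discounted state visitation
distribution of `π` from `ρ`. -/
theorem performance_difference_lemma
    {S A : Type*} [Fintype S] [Fintype A]
    (P : S → A → S → ℝ) (r : S → A → ℝ) (γ : ℝ) (hγ0 : 0 ≤ γ) (hγ1 : γ < 1)
    (hP0 : ∀ s a s', 0 ≤ P s a s') (hP1 : ∀ s a, ∑ s', P s a s' = 1)
    (π π' : S → A → ℝ)
    (hπ0 : ∀ s a, 0 ≤ π s a) (hπ1 : ∀ s, ∑ a, π s a = 1)
    (hπ'0 : ∀ s a, 0 ≤ π' s a) (hπ'1 : ∀ s, ∑ a, π' s a = 1)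
    (ρ : S → ℝ) (hρ0 : ∀ s, 0 ≤ ρ s) (hρ1 : ∑ s, ρ s = 1)
    (p : ℕ → S → ℝ) (hp0 : p 0 = ρ)
    (hpstep : ∀ t s', p (t + 1) s' = ∑ s, ∑ a, p t s * π s a * P s a s')
    (V' : S → ℝ)
    (hV' : ∀ s, V' s = ∑ a, π' s a * (r s a + γ * ∑ s', P s a s' * V' s'))
    (Q' : S → A → ℝ) (hQ' : ∀ s a, Q' s a = r s a + γ * ∑ s', P s a s' * V' s')
    (Adv' : S → A → ℝ) (hAdv' : ∀ s a, Adv' s a = Q' s a - V' s)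
    (Vπρ : ℝ) (hVπρ : Vπρ = ∑' t : ℕ, γ ^ t * ∑ s, p t s * ∑ a, π s a * r s a)
    (d : S → ℝ) (hd : ∀ s, d s = (1 - γ) * ∑' t : ℕ, γ ^ t * p t s) :
    Vπρ - ∑ s, ρ s * V' s =
      (1 / (1 - γ)) * ∑ s, d s * ∑ a, π s a * Adv' s a := by
  have hγne : (1 : ℝ) - γ ≠ 0 := by linarith
  -- nonnegativity and normalization of p
  have hpnn : ∀ t s, 0 ≤ p t s := by
    intro t
    induction t with
    | zero => intro s; rw [hp0]; exact hρ0 s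
    | succ t ih =>
      intro s'
      rw [hpstep]
      refine Finset.sum_nonneg fun s _ => Finset.sum_nonneg fun a _ => ?_
      exact mul_nonneg (mul_nonneg (ih s) (hπ0 s a)) (hP0 s a s')
  have hpsum : ∀ t, ∑ s, p t s = 1 := by
    intro t
    induction t with
    | zero => rw [hp0]; exact hρ1
    | succ t ih =>
      simp only [hpstep]
      rw [Finset.sum_comm]
      have key : ∀ s, ∑ s', ∑ a, p t s * π s a * P s a s' = p t s := by
        intro s
        rw [Finset.sum_comm]
        calc ∑ a, ∑ s', p t s * π s a * P s a s'
            = ∑ a, p t s * π s a * ∑ s', P s a s' := by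
              refine Finset.sum_congr rfl fun a _ => ?_
              rw [Finset.mul_sum]
          _ = ∑ a, p t s * π s a := by simp [hP1]
          _ = p t s * ∑ a, π s a := by rw [Finset.mul_sum]
          _ = p t s := by rw [hπ1, mul_one]
      simp only [key]; exact ih
  have hple1 : ∀ t s, p t s ≤ 1 := by
    intro t s
    calc p t s ≤ ∑ s, p t s := Finset.single_le_sum (fun s _ => hpnn t s) (mem_univ s)
      _ = 1 := hpsum t
  have hgeo : Summable fun t : ℕ => γ ^ t := summable_geometric_of_lt_one hγ0 hγ1
  -- abbreviations
  set W : ℕ → ℝ := fun t => ∑ s, p t s * V' s with hWdef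
  set c : ℕ → ℝ := fun t => ∑ s, p t s * ∑ a, π s a * r s a with hcdef
  set g : S → ℝ := fun s => ∑ a, π s a * Adv' s a with hgdef
  have hγpow : ∀ t : ℕ, (0:ℝ) ≤ γ ^ t := fun t => pow_nonneg hγ0 t
  -- bounds
  have habs : ∀ (f : S → ℝ) (t : ℕ), |∑ s, p t s * f s| ≤ ∑ s, |f s| := by
    intro f t
    calc |∑ s, p t s * f s| ≤ ∑ s, |p t s * f s| := Finset.abs_sum_le_sum_abs _ _
      _ ≤ ∑ s, |f s| := by
        refine Finset.sum_le_sum fun s _ => ?_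
        rw [abs_mul, abs_of_nonneg (hpnn t s)]
        exact mul_le_of_le_one_left (abs_nonneg _) (hple1 t s)
  have hsummW : Summable fun t => γ ^ t * W t := by
    refine Summable.of_norm_bounded (g := fun t => (∑ s, |V' s|) * γ ^ t)
      (hgeo.mul_left _) fun t => ?_
    rw [Real.norm_eq_abs, abs_mul, abs_of_nonneg (hγpow t)]
    exact (mul_le_mul_of_nonneg_left (habs V' t) (hγpow t)).trans_eq (mul_comm _ _)
  have hsummc : Summable fun t => γ ^ t * c t := by
    refine Summable.of_norm_bounded (g := fun t => (∑ s, |∑ a, π s a * r s a|) * γ ^ t)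
      (hgeo.mul_left _) fun t => ?_
    rw [Real.norm_eq_abs, abs_mul, abs_of_nonneg (hγpow t)]
    exact (mul_le_mul_of_nonneg_left (habs _ t) (hγpow t)).trans_eq (mul_comm _ _)
  have hsum_ps : ∀ s, Summable fun t => γ ^ t * p t s := by
    intro s
    refine Summable.of_norm_bounded (g := fun t => γ ^ t) hgeo fun t => ?_
    rw [Real.norm_eq_abs, abs_mul, abs_of_nonneg (hγpow t), abs_of_nonneg (hpnn t s)]
    exact mul_le_of_le_one_right (hγpow t) (hple1 t s)
  -- telescoping sum
  have hsumW1 : Summable fun t => γ ^ (t + 1) * W (t + 1) :=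
    (summable_nat_add_iff 1).mpr hsummW
  have htel : ∑' t : ℕ, (γ ^ (t + 1) * W (t + 1) - γ ^ t * W t) = - W 0 := by
    have hsummT : Summable fun t => γ ^ (t + 1) * W (t + 1) - γ ^ t * W t :=
      hsumW1.sub hsummW
    have hW0 : Filter.Tendsto (fun t => γ ^ t * W t) Filter.atTop (nhds 0) := by
      refine squeeze_zero_norm (a := fun t => (∑ s, |V' s|) * γ ^ t) (fun t => ?_) ?_
      · rw [Real.norm_eq_abs, abs_mul, abs_of_nonneg (hγpow t)]
        exact (mul_le_mul_of_nonneg_left (habs V' t) (hγpow t)).trans_eq (mul_comm _ _)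
      · have := (tendsto_pow_atTop_nhds_zero_of_lt_one hγ0 hγ1).const_mul (∑ s, |V' s|)
        simpa using this
    have hHas : HasSum (fun t => γ ^ (t + 1) * W (t + 1) - γ ^ t * W t) (- W 0) := by
      rw [hsummT.hasSum_iff_tendsto_nat]
      have heq : ∀ n, ∑ i ∈ Finset.range n,
          (γ ^ (i + 1) * W (i + 1) - γ ^ i * W i) = γ ^ n * W n - γ ^ 0 * W 0 :=
        fun n => Finset.sum_range_sub (fun t => γ ^ t * W t) n
      simp only [heq, pow_zero, one_mul]
      simpa using hW0.sub_const (W 0)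
    exact hHas.tsum_eq
  -- key pointwise identity
  have hkey : ∀ t, ∑ s, p t s * g s = c t + (γ * W (t + 1) - W t) := by
    intro t
    have hg : ∀ s, g s = (∑ a, π s a * r s a)
        + γ * (∑ a, π s a * ∑ s', P s a s' * V' s') - V' s := by
      intro s
      simp only [hgdef, hAdv', hQ']
      have : ∀ a, π s a * (r s a + γ * ∑ s', P s a s' * V' s' - V' s)
          = π s a * r s a + γ * (π s a * ∑ s', P s a s' * V' s') - π s a * V' s := by
        intro a; ring
      rw [Finset.sum_congr rfl fun a _ => this a]
      rw [Finset.sum_sub_distrib, Finset.sum_add_distrib, ← Finset.mul_sum,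
        ← Finset.sum_mul, hπ1, one_mul]
    have hX : ∑ s, p t s * ∑ a, π s a * ∑ s', P s a s' * V' s' = W (t + 1) := by
      simp only [hWdef]
      calc ∑ s, p t s * ∑ a, π s a * ∑ s', P s a s' * V' s'
          = ∑ s, ∑ a, ∑ s', p t s * π s a * P s a s' * V' s' := by
            refine Finset.sum_congr rfl fun s _ => ?_
            rw [Finset.mul_sum]
            refine Finset.sum_congr rfl fun a _ => ?_
            rw [Finset.mul_sum, Finset.mul_sum]
            refine Finset.sum_congr rfl fun s' _ => ?_
            ring
        _ = ∑ s, ∑ s', ∑ a, p t s * π s a * P s a s' * V' s' :=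
            Finset.sum_congr rfl fun s _ => Finset.sum_comm
        _ = ∑ s', ∑ s, ∑ a, p t s * π s a * P s a s' * V' s' :=
            Finset.sum_comm
        _ = ∑ s', p (t + 1) s' * V' s' := by
            refine Finset.sum_congr rfl fun s' _ => ?_
            rw [hpstep, Finset.sum_mul]
            refine Finset.sum_congr rfl fun s _ => ?_
            rw [Finset.sum_mul]
    calc ∑ s, p t s * g s
        = ∑ s, (p t s * ∑ a, π s a * r s a
            + γ * (p t s * ∑ a, π s a * ∑ s', P s a s' * V' s') - p t s * V' s) := by
          refine Finset.sum_congr rfl fun s _ => ?_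
          rw [hg s]; ring
      _ = c t + γ * (∑ s, p t s * ∑ a, π s a * ∑ s', P s a s' * V' s') - W t := by
          rw [Finset.sum_sub_distrib, Finset.sum_add_distrib, ← Finset.mul_sum]
      _ = c t + (γ * W (t + 1) - W t) := by rw [hX]; ring
  -- compute the RHS
  have hW0eq : W 0 = ∑ s, ρ s * V' s := by
    simp only [hWdef, hp0]
  have hRHS : (1 / (1 - γ)) * ∑ s, d s * ∑ a, π s a * Adv' s a
      = ∑' t : ℕ, γ ^ t * ∑ s, p t s * g s := by
    have h1 : ∀ s, d s * ∑ a, π s a * Adv' s a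
        = (1 - γ) * ∑' t : ℕ, γ ^ t * p t s * g s := by
      intro s
      have hgs : (∑ a, π s a * Adv' s a) = g s := rfl
      rw [hd s, hgs, mul_assoc, ← tsum_mul_right]
    simp only [h1, ← Finset.mul_sum]
    rw [← mul_assoc, one_div, inv_mul_cancel₀ hγne, one_mul]
    rw [← Summable.tsum_finsetSum (fun s _ => (hsum_ps s).mul_right (g s))]
    refine tsum_congr fun t => ?_
    rw [Finset.mul_sum]
    refine Finset.sum_congr rfl fun s _ => ?_
    ring
  rw [hRHS]
  have hsplit : ∀ t : ℕ, γ ^ t * ∑ s, p t s * g s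
      = γ ^ t * c t + (γ ^ (t + 1) * W (t + 1) - γ ^ t * W t) := by
    intro t
    rw [hkey t, pow_succ]
    ring
  rw [tsum_congr hsplit, Summable.tsum_add hsummc (hsumW1.sub hsummW), htel, hW0eq, ← hVπρ]
  ring
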